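/- Let X be a random vector in ℝ² whose law is rotation invariant, with E‖X‖₂ < ∞ and X ≠ 0 almost surely, and let β̃, β* ∈ ℝ² be nonzero with angle θ = θ(β̃, β*). Then E[ |⟨β*, X⟩| · 1{ sign⟨β̃, X⟩ ≠ sign⟨β*, X⟩ } ] = (1/π) · ( ∫₀^θ sin t dt ) · ‖β*‖₂ · E‖X‖₂ = (1/π)(1 − cos θ) · ‖β*‖₂ · E‖X‖₂. -/

import Mathlib

/-! Since `|s| 𝟙{sgn t ≠ sgn s} = (sgn s * s - sgn t * s) / 2`, the excess risk is half the
difference of two sign correlations `E[sgn⟪a, X⟫ ⟪b, X⟫]`. Identify the plane with `ℂ`: by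
rotation invariance and Fubini the law of `X` may be replaced by its average over all rotations,
and since `x ↦ sgn⟪a, x⟫ ⟪b, x⟫` is positively homogeneous this average factors as an integral
over the unit circle times `E‖X‖`. On the circle, with `δ` the angle between `a` and `b`, one
computes `∫_{-π}^{π} sgn (cos u) cos (u + δ) du = 4 cos δ`, so that
`E[sgn⟪a, X⟫ ⟪b, X⟫] = (2 / π) (⟪a, b⟫ / ‖a‖) E‖X‖`. -/

open MeasureTheory RealInnerProductSpace intervalIntegral

noncomputable def sgn (z : ℝ) : ℝ := if 0 < z then 1 else -1

open Real
open Complex (I arg)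
open scoped Complex

lemma sgn_of_pos {t : ℝ} (h : 0 < t) : sgn t = 1 := if_pos h

lemma sgn_of_nonpos {t : ℝ} (h : t ≤ 0) : sgn t = -1 := if_neg h.not_gt

lemma abs_sgn (t : ℝ) : |sgn t| = 1 := by
  unfold sgn; split_ifs <;> simp

lemma sgn_mul_self (t : ℝ) : sgn t * t = |t| := by
  rcases lt_or_ge 0 t with ht | ht
  · rw [sgn_of_pos ht, one_mul, abs_of_pos ht]
  · rw [sgn_of_nonpos ht, neg_one_mul, abs_of_nonpos ht]

lemma sgn_mul_of_pos {c : ℝ} (hc : 0 < c) (t : ℝ) : sgn (c * t) = sgn t := by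
  simp only [sgn, mul_pos_iff_of_pos_left hc]

lemma sgn_mul_mul_of_nonneg {r : ℝ} (hr : 0 ≤ r) (t s : ℝ) :
    sgn (r * t) * (r * s) = r * (sgn t * s) := by
  rcases hr.eq_or_lt with rfl | hr
  · simp
  · rw [sgn_mul_of_pos hr]; ring

lemma measurable_sgn : Measurable sgn :=
  Measurable.ite (measurableSet_lt measurable_const measurable_id) measurable_const measurable_const

lemma abs_mul_ite_sgn_ne (s t : ℝ) [Decidable (sgn t ≠ sgn s)] :
    |s| * (if sgn t ≠ sgn s then 1 else 0) = (sgn s * s - sgn t * s) / 2 := by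
  rcases lt_or_ge 0 s with hs | hs <;> rcases lt_or_ge 0 t with ht | ht <;>
    norm_num [sgn_of_pos, sgn_of_nonpos, abs_of_pos, abs_of_nonpos, hs, ht]
  linarith

lemma integral_abs_cos : ∫ u in -π..π, |cos u| = 4 := by
  have hper : Function.Periodic (fun u => |cos u|) π := fun u => by simp [cos_add_pi]
  have hint (a b : ℝ) : IntervalIntegrable (fun u => |cos u|) volume a b :=
    continuous_cos.abs.intervalIntegrable _ _
  have hhalf (t : ℝ) : ∫ u in t..t + π, |cos u| = 2 := by
    rw [hper.intervalIntegral_add_eq t (-(π / 2)), show -(π / 2) + π = π / 2 by ring,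
      integral_congr fun u hu => abs_of_nonneg (cos_nonneg_of_mem_Icc
        (by rwa [Set.uIcc_of_le (by linarith [pi_pos])] at hu)), integral_cos]
    norm_num
  calc ∫ u in -π..π, |cos u| = (∫ u in -π..-π + π, |cos u|) + ∫ u in 0..0 + π, |cos u| := by
        rw [neg_add_cancel, zero_add, integral_add_adjacent_intervals (hint _ _) (hint _ _)]
    _ = 4 := by rw [hhalf, hhalf]; norm_num

lemma integral_sgn_cos_mul_sin : ∫ u in -π..π, sgn (cos u) * sin u = 0 := by
  have h := integral_comp_neg (a := -π) (b := π) fun u => sgn (cos u) * sin u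
  simp only [cos_neg, sin_neg, mul_neg, neg_neg, intervalIntegral.integral_neg] at h
  linarith

lemma intervalIntegrable_sgn_cos_mul_sin (a b : ℝ) :
    IntervalIntegrable (fun u => sgn (cos u) * sin u) volume a b :=
  (intervalIntegrable_const (c := (1 : ℝ))).mono_fun'
    ((measurable_sgn.comp continuous_cos.measurable).mul
      continuous_sin.measurable).aestronglyMeasurable
    (ae_of_all _ fun u => by simpa [abs_sgn] using abs_sin_le_one u)

lemma integral_sgn_cos_sub_mul_cos_sub (α β : ℝ) :
    ∫ φ in 0..2 * π, sgn (cos (φ - α)) * cos (φ - β) = 4 * cos (α - β) := by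
  set f : ℝ → ℝ := fun u => sgn (cos u) * cos (u + (α - β))
  have hper : Function.Periodic f (2 * π) := fun u => by
    simp only [f, show u + 2 * π + (α - β) = u + (α - β) + 2 * π by ring, cos_add_two_pi]
  have hsplit : ∀ u, f u = cos (α - β) * |cos u| - sin (α - β) * (sgn (cos u) * sin u) :=
    fun u => by simp only [f, cos_add, ← sgn_mul_self]; ring
  calc ∫ φ in 0..2 * π, sgn (cos (φ - α)) * cos (φ - β)
      = ∫ φ in 0..2 * π, f (φ - α) := by simp only [f, sub_add_sub_cancel]
    _ = ∫ u in -α..-α + 2 * π, f u := by rw [integral_comp_sub_right]; ring_nf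
    _ = ∫ u in -π..π, f u := by rw [hper.intervalIntegral_add_eq (-α) (-π)]; ring_nf
    _ = 4 * cos (α - β) := by
      simp_rw [hsplit]
      rw [integral_sub ((continuous_cos.abs.intervalIntegrable _ _).const_mul _)
          ((intervalIntegrable_sgn_cos_mul_sin _ _).const_mul _),
        intervalIntegral.integral_const_mul, intervalIntegral.integral_const_mul, integral_abs_cos,
        integral_sgn_cos_mul_sin]
      ring

lemma inner_ofReal_mul_exp (z : ℂ) (r φ : ℝ) :
    ⟪z, r * cexp (φ * I)⟫ = ‖z‖ * r * cos (φ - arg z) := by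
  rw [Complex.inner, cos_sub]
  simp only [Complex.mul_re, Complex.mul_im, Complex.ofReal_re, Complex.ofReal_im,
    Complex.exp_ofReal_mul_I_re, Complex.exp_ofReal_mul_I_im, Complex.conj_re, Complex.conj_im,
    ← Complex.norm_mul_cos_arg z, ← Complex.norm_mul_sin_arg z]
  ring

lemma inner_exp_mul_I (z : ℂ) (φ : ℝ) : ⟪z, cexp (φ * I)⟫ = ‖z‖ * cos (φ - arg z) := by
  simpa using inner_ofReal_mul_exp z 1 φ

lemma integral_sgn_inner_mul_inner_exp (a b : ℂ) :
    ∫ φ in 0..2 * π, sgn ⟪a, cexp (φ * I)⟫ * ⟪b, cexp (φ * I)⟫ = 4 * (⟪a, b⟫ / ‖a‖) := by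
  simp_rw [inner_exp_mul_I]
  rcases eq_or_ne a 0 with rfl | ha
  · simp only [norm_zero, zero_mul, sgn_of_nonpos le_rfl, inner_zero_left, zero_div, mul_zero,
      neg_one_mul, intervalIntegral.integral_neg, intervalIntegral.integral_const_mul,
      integral_comp_sub_right fun φ => cos φ, integral_cos]
    rw [show 2 * π - arg b = -arg b + 2 * π by ring, sin_add_two_pi]
    simp
  · have hab : ⟪a, b⟫ = ‖a‖ * ‖b‖ * cos (arg a - arg b) := by
      conv_lhs => rw [← Complex.norm_mul_exp_arg_mul_I b]
      rw [inner_ofReal_mul_exp, ← cos_neg, neg_sub]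
    have ha' : 0 < ‖a‖ := norm_pos_iff.2 ha
    simp_rw [sgn_mul_of_pos ha', mul_left_comm _ ‖b‖]
    rw [intervalIntegral.integral_const_mul, integral_sgn_cos_sub_mul_cos_sub, hab]
    field_simp

theorem integral_comp_exp_mul_I_mul {f : ℂ → ℝ}
    (hf : ∀ (r : ℝ) (z : ℂ), 0 ≤ r → f (r * z) = r * f z) (z : ℂ) :
    ∫ φ in 0..2 * π, f (cexp (φ * I) * z) = ‖z‖ * ∫ φ in 0..2 * π, f (cexp (φ * I)) := by
  have hpolar (φ : ℝ) : cexp (φ * I) * z = ‖z‖ * cexp ((φ + arg z : ℝ) * I) := by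
    conv_lhs => rw [← Complex.norm_mul_exp_arg_mul_I z]
    push_cast
    rw [add_mul, Complex.exp_add]
    ring
  have hper : Function.Periodic (fun φ : ℝ => f (cexp (φ * I))) (2 * π) := fun φ => by
    simp only [← Circle.coe_exp, Circle.periodic_exp φ]
  simp_rw [hpolar, hf _ _ (norm_nonneg z)]
  rw [intervalIntegral.integral_const_mul, integral_comp_add_right (fun φ => f (cexp (φ * I))),
    zero_add, add_comm, hper.intervalIntegral_add_eq (arg z) 0, zero_add]

theorem two_pi_mul_integral_eq_of_map_rotation_eq {ν : Measure ℂ} [SFinite ν]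
    (hν : ∀ a : Circle, ν.map (rotation a) = ν) (hint : Integrable (‖·‖) ν) {f : ℂ → ℝ}
    (hf : Measurable f) (hhom : ∀ (r : ℝ) (z : ℂ), 0 ≤ r → f (r * z) = r * f z) {C : ℝ}
    (hC : ∀ z, |f z| ≤ C * ‖z‖) :
    2 * π * ∫ z, f z ∂ν = (∫ φ in 0..2 * π, f (cexp (φ * I))) * ∫ z, ‖z‖ ∂ν := by
  set μ := volume.restrict (Set.Ioc 0 (2 * π))
  have hrot (φ : ℝ) : ∫ z, f (cexp (φ * I) * z) ∂ν = ∫ z, f z ∂ν := by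
    conv_rhs => rw [← hν (Circle.exp φ)]
    rw [integral_map (rotation _).continuous.measurable.aemeasurable hf.aestronglyMeasurable]
    simp only [rotation_apply, Circle.coe_exp]
  have hprod : Integrable (Function.uncurry fun (φ : ℝ) (z : ℂ) => f (cexp (φ * I) * z))
      (μ.prod ν) := by
    refine ((hint.const_mul C).comp_snd μ).mono' (hf.comp (by fun_prop)).aestronglyMeasurable
      (ae_of_all _ fun ⟨φ, z⟩ => ?_)
    simpa [norm_mul] using hC (cexp (φ * I) * z)
  calc 2 * π * ∫ z, f z ∂ν = ∫ φ, ∫ z, f (cexp (φ * I) * z) ∂ν ∂μ := by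
        simp [hrot, μ, two_pi_pos.le]
    _ = ∫ z, ∫ φ, f (cexp (φ * I) * z) ∂μ ∂ν := integral_integral_swap hprod
    _ = ∫ z, (∫ φ in 0..2 * π, f (cexp (φ * I))) * ‖z‖ ∂ν := by
        congr 1; ext z
        rw [mul_comm, ← integral_comp_exp_mul_I_mul hhom, integral_of_le two_pi_pos.le]
    _ = _ := MeasureTheory.integral_const_mul _ _

section RotationInvariant

variable {E : Type*} [NormedAddCommGroup E] [InnerProductSpace ℝ E]

lemma abs_sgn_inner_mul_inner_le (a b x : E) : |sgn ⟪a, x⟫ * ⟪b, x⟫| ≤ ‖b‖ * ‖x‖ := by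
  rw [abs_mul, abs_sgn, one_mul]
  exact abs_real_inner_le_norm b x

variable [MeasurableSpace E] [BorelSpace E] {Ω : Type*} [MeasurableSpace Ω] {P : Measure Ω}
  {X : Ω → E}

lemma measurable_sgn_inner_mul_inner (a b : E) :
    Measurable fun x : E => sgn ⟪a, x⟫ * ⟪b, x⟫ :=
  (measurable_sgn.comp (continuous_const.inner continuous_id).measurable).mul
    (continuous_const.inner continuous_id).measurable

lemma integrable_sgn_inner_mul_inner (hX : AEMeasurable X P)
    (hint : Integrable (fun ω => ‖X ω‖) P) (a b : E) :
    Integrable (fun ω => sgn ⟪a, X ω⟫ * ⟪b, X ω⟫) P :=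
  (hint.const_mul ‖b‖).mono'
    ((measurable_sgn_inner_mul_inner a b).comp_aemeasurable hX).aestronglyMeasurable
    (ae_of_all _ fun ω => abs_sgn_inner_mul_inner_le a b (X ω))

lemma map_rotation_map_comp_symm (L : ℂ ≃ₗᵢ[ℝ] E) (hX : Measurable X)
    (hrot : ∀ R : E ≃ₗᵢ[ℝ] E, P.map (fun ω => R (X ω)) = P.map X) (a : Circle) :
    (P.map (L.symm ∘ X)).map (rotation a) = P.map (L.symm ∘ X) := by
  have hL := L.symm.continuous.measurable
  rw [Measure.map_map (rotation a).continuous.measurable (hL.comp hX),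
    ← Measure.map_map hL hX, ← hrot (L.symm.trans ((rotation a).trans L)),
    Measure.map_map hL (by fun_prop)]
  congr 1
  ext ω
  simp

theorem integral_sgn_inner_mul_inner (hE : Module.finrank ℝ E = 2) [SFinite P]
    (hX : Measurable X) (hrot : ∀ R : E ≃ₗᵢ[ℝ] E, P.map (fun ω => R (X ω)) = P.map X)
    (hint : Integrable (fun ω => ‖X ω‖) P) (a b : E) :
    ∫ ω, sgn ⟪a, X ω⟫ * ⟪b, X ω⟫ ∂P = 2 / π * (⟪a, b⟫ / ‖a‖) * ∫ ω, ‖X ω‖ ∂P := by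
  have := FiniteDimensional.of_finrank_eq_succ hE
  let L := Complex.isometryOfOrthonormal ((stdOrthonormalBasis ℝ E).reindex (finCongr hE))
  have hY : Measurable (L.symm ∘ X) := L.symm.continuous.measurable.comp hX
  have hf := measurable_sgn_inner_mul_inner (L.symm a) (L.symm b)
  have key := two_pi_mul_integral_eq_of_map_rotation_eq (map_rotation_map_comp_symm L hX hrot)
    ((integrable_map_measure measurable_norm.aestronglyMeasurable hY.aemeasurable).2
      (by simpa [Function.comp_def] using hint))
    hf (fun r z hr => by
      simp only [← Complex.real_smul, real_inner_smul_right, sgn_mul_mul_of_nonneg hr])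
    (abs_sgn_inner_mul_inner_le _ _)
  rw [integral_map hY.aemeasurable hf.aestronglyMeasurable,
    integral_map hY.aemeasurable measurable_norm.aestronglyMeasurable,
    integral_sgn_inner_mul_inner_exp] at key
  simp only [Function.comp_apply, LinearIsometryEquiv.inner_map_map,
    LinearIsometryEquiv.norm_map] at key
  generalize ⟪a, b⟫ / ‖a‖ = c at key ⊢
  field_simp
  linarith

theorem integral_abs_inner_mul_indicator_sgn_ne (hE : Module.finrank ℝ E = 2) [SFinite P]
    (hX : Measurable X) (hrot : ∀ R : E ≃ₗᵢ[ℝ] E, P.map (fun ω => R (X ω)) = P.map X)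
    (hint : Integrable (fun ω => ‖X ω‖) P) (βt βs : E) :
    ∫ ω, |⟪βs, X ω⟫| *
        Set.indicator {ω | sgn ⟪βt, X ω⟫ ≠ sgn ⟪βs, X ω⟫} (fun _ => (1 : ℝ)) ω ∂P
      = (‖βs‖ - ⟪βt, βs⟫ / ‖βt‖) / π * ∫ ω, ‖X ω‖ ∂P := by
  have hcorr := integral_sgn_inner_mul_inner hE hX hrot hint
  have hint' := integrable_sgn_inner_mul_inner hX.aemeasurable hint
  calc _ = ∫ ω, (sgn ⟪βs, X ω⟫ * ⟪βs, X ω⟫ - sgn ⟪βt, X ω⟫ * ⟪βs, X ω⟫) / 2 ∂P :=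
        integral_congr_ae (ae_of_all _ fun ω => by
          rw [Set.indicator_apply]; exact abs_mul_ite_sgn_ne _ _)
    _ = _ := by
        rw [MeasureTheory.integral_div, integral_sub (hint' _ _) (hint' _ _), hcorr, hcorr,
          real_inner_self_eq_norm_sq, sq, mul_self_div_self]
        ring

end RotationInvariant

theorem excess_risk_rotation_invariant_exact_general {Ω : Type*} [MeasurableSpace Ω]
    (P : Measure Ω) [IsProbabilityMeasure P]
    (X : Ω → EuclideanSpace ℝ (Fin 2)) (hX : Measurable X)
    (hrot : ∀ R : EuclideanSpace ℝ (Fin 2) ≃ₗᵢ[ℝ] EuclideanSpace ℝ (Fin 2),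
      Measure.map (fun ω => R (X ω)) P = Measure.map X P)
    (hint : Integrable (fun ω => ‖X ω‖) P)
    (βt βs : EuclideanSpace ℝ (Fin 2)) :
    (∫ ω, |⟪βs, X ω⟫| *
        Set.indicator {ω | sgn ⟪βt, X ω⟫ ≠ sgn ⟪βs, X ω⟫} (fun _ => (1 : ℝ)) ω ∂P
      = (1 / Real.pi) *
          (∫ t in (0 : ℝ)..Real.arccos (⟪βt, βs⟫ / (‖βt‖ * ‖βs‖)), Real.sin t) *
          ‖βs‖ * ∫ ω, ‖X ω‖ ∂P) ∧
    (∫ ω, |⟪βs, X ω⟫| *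
        Set.indicator {ω | sgn ⟪βt, X ω⟫ ≠ sgn ⟪βs, X ω⟫} (fun _ => (1 : ℝ)) ω ∂P
      = (1 / Real.pi) * (1 - Real.cos (Real.arccos (⟪βt, βs⟫ / (‖βt‖ * ‖βs‖)))) *
          ‖βs‖ * ∫ ω, ‖X ω‖ ∂P) := by
  have hcos := abs_le.1 (abs_real_inner_div_norm_mul_norm_le_one βt βs)
  rw [integral_sin, cos_zero, and_self, cos_arccos hcos.1 hcos.2,
    integral_abs_inner_mul_indicator_sgn_ne finrank_euclideanSpace_fin hX hrot hint]
  rcases eq_or_ne βs 0 with rfl | hβs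
  · simp
  · field_simp

/-- Exact excess classification risk in the rotation-invariant planar case:
`E[|⟨β*,X⟩| 𝟙{sign⟨β̃,X⟩ ≠ sign⟨β*,X⟩}] = (1/π)(∫₀^θ sin t dt)‖β*‖₂ E‖X‖₂
 = (1/π)(1 − cos θ)‖β*‖₂ E‖X‖₂`. -/
theorem excess_risk_rotation_invariant_exact {Ω : Type*} [MeasurableSpace Ω]
    (P : Measure Ω) [IsProbabilityMeasure P]
    (X : Ω → EuclideanSpace ℝ (Fin 2)) (hX : Measurable X)
    (hrot : ∀ R : EuclideanSpace ℝ (Fin 2) ≃ₗᵢ[ℝ] EuclideanSpace ℝ (Fin 2),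
      Measure.map (fun ω => R (X ω)) P = Measure.map X P)
    (hint : Integrable (fun ω => ‖X ω‖) P)
    (hne : ∀ᵐ ω ∂P, X ω ≠ 0)
    (βt βs : EuclideanSpace ℝ (Fin 2)) (hβt : βt ≠ 0) (hβs : βs ≠ 0) :
    (∫ ω, |⟪βs, X ω⟫| *
        Set.indicator {ω | sgn ⟪βt, X ω⟫ ≠ sgn ⟪βs, X ω⟫} (fun _ => (1 : ℝ)) ω ∂P
      = (1 / Real.pi) *
          (∫ t in (0 : ℝ)..Real.arccos (⟪βt, βs⟫ / (‖βt‖ * ‖βs‖)), Real.sin t) *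
          ‖βs‖ * ∫ ω, ‖X ω‖ ∂P) ∧
    (∫ ω, |⟪βs, X ω⟫| *
        Set.indicator {ω | sgn ⟪βt, X ω⟫ ≠ sgn ⟪βs, X ω⟫} (fun _ => (1 : ℝ)) ω ∂P
      = (1 / Real.pi) * (1 - Real.cos (Real.arccos (⟪βt, βs⟫ / (‖βt‖ * ‖βs‖)))) *
          ‖βs‖ * ∫ ω, ‖X ω‖ ∂P) :=
  excess_risk_rotation_invariant_exact_general P X hX hrot hint βt βs
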